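/- arXiv:1812.03513 — 9 statements merged into one kernel-verified Lean document; each statement's English description precedes it below -/
import Mathlib

section
/- For all real z ≥ 0 and z₀ > 0, we have √z ≤ √z₀ + (1/2)z₀^{-1/2}(z−z₀) − (1/8)z₀^{-3/2}(z−z₀)² + (1/16)z₀^{-5/2}(z−z₀)³. -/
theorem sqrt_cubic_upper_bound (z z₀ : ℝ) (hz : 0 ≤ z) (hz₀ : 0 < z₀) :
    Real.sqrt z ≤ Real.sqrt z₀ + (1/2) * z₀ ^ (-(1:ℝ)/2) * (z - z₀)
      - (1/8) * z₀ ^ (-(3:ℝ)/2) * (z - z₀) ^ 2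
      + (1/16) * z₀ ^ (-(5:ℝ)/2) * (z - z₀) ^ 3 := by
  set s := Real.sqrt z with hs
  set t := Real.sqrt z₀ with ht
  have hsnn : 0 ≤ s := Real.sqrt_nonneg z
  have htpos : 0 < t := Real.sqrt_pos.mpr hz₀
  have hzs : z = s ^ 2 := (Real.sq_sqrt hz).symm
  have hz₀t : z₀ = t ^ 2 := (Real.sq_sqrt hz₀.le).symm
  have key : ∀ n : ℕ, z₀ ^ (-(n:ℝ)/2) = (t⁻¹) ^ n := by
    intro n
    rw [show (-(n:ℝ)/2) = (1/2) * (-(n:ℝ)) by ring, Real.rpow_mul hz₀.le,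
      ← Real.sqrt_eq_rpow, ← ht, Real.rpow_neg htpos.le, Real.rpow_natCast, inv_pow]
  have h1 := key 1
  have h3 := key 3
  have h5 := key 5
  push_cast at h1 h3 h5
  rw [h1, h3, h5, hzs, hz₀t]
  have hne : t ≠ 0 := htpos.ne'
  have hkey : (t + 1 / 2 * t⁻¹ ^ 1 * (s ^ 2 - t ^ 2) - 1 / 8 * t⁻¹ ^ 3 * (s ^ 2 - t ^ 2) ^ 2 +
      1 / 16 * t⁻¹ ^ 5 * (s ^ 2 - t ^ 2) ^ 3) - s
      = (s - t) ^ 4 * (s ^ 2 + 4 * s * t + 5 * t ^ 2) / (16 * t ^ 5) := by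
    field_simp
    ring
  have hnum : 0 ≤ (s - t) ^ 4 * (s ^ 2 + 4 * s * t + 5 * t ^ 2) / (16 * t ^ 5) := by
    apply div_nonneg _ (by positivity)
    apply mul_nonneg (by positivity)
    nlinarith [sq_nonneg (s + 2 * t), sq_nonneg s, sq_nonneg t]
  linarith [hkey ▸ hnum]
end

section
/- For all x ∈ [0,1], exp(−(8/3)·x(1−x)(x−1/2)²) ≥ x. -/
theorem exp_ineq_onemax (x : ℝ) (hx : x ∈ Set.Icc (0:ℝ) 1) :
    Real.exp (-(8/3) * (x * (1 - x) * (x - 1/2) ^ 2)) ≥ x := by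
  obtain ⟨h0, h1⟩ := hx
  have h := Real.add_one_le_exp (-(8/3) * (x * (1 - x) * (x - 1/2) ^ 2))
  have key : (0:ℝ) ≤ (1 - x) * (1/4 - x * (x - 1/2) ^ 2) := by
    apply mul_nonneg (by linarith)
    nlinarith [sq_nonneg (x - 1/2), mul_nonneg (sub_nonneg.2 h1) (sq_nonneg (x - 1/2))]
  nlinarith [key]
end

section
/- Let F, C ∈ [0,1] with FC < 1, and let N be a natural number with N ≥ 3/(1−FC). Then the function H_N(z) = (4FCz³ − 6FCNz² + ((2FC+1)N² − 3N + 2)z) / ((N−1)(N−2)) is monotonically increasing on the real interval [0, N]. -/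
theorem H_monotoneOn (F C : ℝ) (hF : F ∈ Set.Icc (0:ℝ) 1) (hC : C ∈ Set.Icc (0:ℝ) 1)
    (hFC : F * C < 1) (N : ℕ) (hN : 3 / (1 - F * C) ≤ (N:ℝ)) :
    MonotoneOn (fun z : ℝ =>
        (4 * F * C * z ^ 3 - 6 * F * C * N * z ^ 2
          + ((2 * F * C + 1) * (N:ℝ) ^ 2 - 3 * N + 2) * z) / (((N:ℝ) - 1) * ((N:ℝ) - 2)))
      (Set.Icc (0:ℝ) (N:ℝ)) := by
  obtain ⟨hF0, hF1⟩ := hF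
  obtain ⟨hC0, hC1⟩ := hC
  have h1 : (0:ℝ) < 1 - F * C := by linarith
  have hN3 : (3:ℝ) ≤ (N:ℝ) := by
    have : (3:ℝ) ≤ 3 / (1 - F * C) := by
      rw [le_div_iff₀ h1]; nlinarith
    linarith
  have hNkey : 3 * (N:ℝ) ≤ (1 - F * C) * (N:ℝ)^2 := by
    have h2 : 3 ≤ (1 - F * C) * (N:ℝ) := by
      rw [div_le_iff₀ h1] at hN; linarith [hN]
    nlinarith
  have hD : (0:ℝ) < ((N:ℝ) - 1) * ((N:ℝ) - 2) := by nlinarith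
  intro x hx y hy hxy
  simp only
  rw [div_le_div_iff₀ hD hD]
  have hFC0 : 0 ≤ F * C := mul_nonneg hF0 hC0
  have hg : 0 ≤ 4*F*C*(x^2 + x*y + y^2) - 6*F*C*(N:ℝ)*(x+y)
      + ((2*F*C+1)*(N:ℝ)^2 - 3*(N:ℝ) + 2) := by
    nlinarith [sq_nonneg (x - y), sq_nonneg (x + y - (N:ℝ)),
      mul_nonneg hFC0 (sq_nonneg (x + y - (N:ℝ))),
      mul_nonneg hFC0 (sq_nonneg (x - y)), hx.1, hx.2, hy.1, hy.2]
  have key : 0 ≤ (y - x) * (4*F*C*(x^2 + x*y + y^2) - 6*F*C*(N:ℝ)*(x+y)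
      + ((2*F*C+1)*(N:ℝ)^2 - 3*(N:ℝ) + 2)) :=
    mul_nonneg (by linarith) hg
  nlinarith [key, hD.le, mul_nonneg key hD.le]
end

section
/- Let F ∈ (0,1) and let N be a real number with N ≥ (5−2F)/(1−F). Then the function R_N(y) = (4Fy³ − 6F(N−1)y² + ((2F+1)N² − (5+4F)N + 2F + 6)y) / ((N−1)(N−2)(N−3)) is monotonically increasing in y on ℝ. -/
theorem R_monotone (F N : ℝ) (hF : F ∈ Set.Ioo (0:ℝ) 1) (hN : (5 - 2 * F) / (1 - F) ≤ N) :
    Monotone (fun y : ℝ =>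
      (4 * F * y ^ 3 - 6 * F * (N - 1) * y ^ 2
        + ((2 * F + 1) * N ^ 2 - (5 + 4 * F) * N + 2 * F + 6) * y)
      / ((N - 1) * (N - 2) * (N - 3))) := by
  obtain ⟨hF0, hF1⟩ := hF
  have h1F : (0:ℝ) < 1 - F := by linarith
  have h1 : 5 - 2 * F ≤ (1 - F) * N := by
    rw [div_le_iff₀ h1F] at hN; linarith [hN]
  have hN3 : 3 < N := by nlinarith
  have hD : 0 < (N - 1) * (N - 2) * (N - 3) := by
    apply mul_pos (mul_pos (by linarith) (by linarith)) (by linarith)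
  intro a b hab
  simp only
  rw [div_le_div_iff_of_pos_right hD]
  have hQ : 0 ≤ 4 * F * (a ^ 2 + a * b + b ^ 2) - 6 * F * (N - 1) * (a + b)
      + ((2 * F + 1) * N ^ 2 - (5 + 4 * F) * N + 2 * F + 6) := by
    nlinarith [mul_nonneg hF0.le (sq_nonneg (a + b - N + 1)),
      mul_nonneg hF0.le (sq_nonneg (a - b)),
      mul_nonneg (sub_nonneg.2 h1) (by linarith : (0:ℝ) ≤ N)]
  nlinarith [mul_nonneg (sub_nonneg.2 hab) hQ]
end

section
/- Let F ∈ (0,1) and let N ≥ max{(5−2F)/(1−F), 625/(24F)}. Then R_N((13/25)N) < 13/25, where R_N(y) = (4Fy³ − 6F(N−1)y² + ((2F+1)N² − (5+4F)N + 2F + 6)y)/((N−1)(N−2)(N−3)). -/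
theorem R_at_thirteen_25 (F N : ℝ) (hF : F ∈ Set.Ioo (0:ℝ) 1)
    (hN : max ((5 - 2 * F) / (1 - F)) (625 / (24 * F)) ≤ N) :
    (4 * F * ((13/25) * N) ^ 3 - 6 * F * (N - 1) * ((13/25) * N) ^ 2
        + ((2 * F + 1) * N ^ 2 - (5 + 4 * F) * N + 2 * F + 6) * ((13/25) * N))
      / ((N - 1) * (N - 2) * (N - 3)) < 13/25 := by
  obtain ⟨hF0, hF1⟩ := hF
  have h1 : (5 - 2 * F) / (1 - F) ≤ N := le_trans (le_max_left _ _) hN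
  have h2 : (625 : ℝ) / (24 * F) ≤ N := le_trans (le_max_right _ _) hN
  have hF1' : (0:ℝ) < 1 - F := by linarith
  have h1' : 5 - 2 * F ≤ N * (1 - F) := (div_le_iff₀ hF1').mp h1
  have h2' : (625 : ℝ) ≤ N * (24 * F) := (div_le_iff₀ (by positivity)).mp h2
  have hN26 : (26 : ℝ) < N := by nlinarith
  have hden : (0:ℝ) < (N - 1) * (N - 2) * (N - 3) := by
    apply mul_pos (mul_pos (by linarith) (by linarith)) (by linarith)
  rw [div_lt_iff₀ hden]
  nlinarith [mul_nonneg (by nlinarith : (0:ℝ) ≤ N * (24 * F) - 625) (sq_nonneg N), mul_pos (mul_pos hF0 (by linarith : (0:ℝ) < N)) (by linarith : (0:ℝ) < N), sq_nonneg N, mul_pos hF0 (by linarith : (0:ℝ) < N)]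
end

section
/- Let F ∈ (0,1) and let N > max{(5−2F)/(1−F), (3125−1224F)/(625−612F)}. Then R_N((8/25)(N−1)) < 12/25 and R_N((17/25)N) > 13/25, where R_N(y) = (4Fy³ − 6F(N−1)y² + ((2F+1)N² − (5+4F)N + 2F + 6)y)/((N−1)(N−2)(N−3)). -/
theorem R_bounds_8_17 (F N : ℝ) (hF : F ∈ Set.Ioo (0:ℝ) 1)
    (hN : max ((5 - 2 * F) / (1 - F)) ((3125 - 1224 * F) / (625 - 612 * F)) < N) :
    ((4 * F * ((8/25) * (N - 1)) ^ 3 - 6 * F * (N - 1) * ((8/25) * (N - 1)) ^ 2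
        + ((2 * F + 1) * N ^ 2 - (5 + 4 * F) * N + 2 * F + 6) * ((8/25) * (N - 1)))
      / ((N - 1) * (N - 2) * (N - 3)) < 12/25)
    ∧ ((4 * F * ((17/25) * N) ^ 3 - 6 * F * (N - 1) * ((17/25) * N) ^ 2
        + ((2 * F + 1) * N ^ 2 - (5 + 4 * F) * N + 2 * F + 6) * ((17/25) * N))
      / ((N - 1) * (N - 2) * (N - 3)) > 13/25) := by
  obtain ⟨hF0, hF1⟩ := hF
  have h1F : (0:ℝ) < 1 - F := by linarith
  have h2F : (0:ℝ) < 625 - 612 * F := by linarith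
  have hA := lt_of_le_of_lt (le_max_left _ _) hN
  have hB := lt_of_le_of_lt (le_max_right _ _) hN
  rw [div_lt_iff₀ h1F] at hA
  rw [div_lt_iff₀ h2F] at hB
  -- hA : 5 - 2F < N(1-F), hB : 3125 - 1224F < N(625 - 612F)
  have hN5 : 5 < N := by nlinarith
  have hN1 : (0:ℝ) < N - 1 := by linarith
  have hN2 : (0:ℝ) < N - 2 := by linarith
  have hN3 : (0:ℝ) < N - 3 := by linarith
  have hD : (0:ℝ) < (N - 1) * (N - 2) * (N - 3) := by positivity
  have hB2 : 612 * F * (N - 2) < 625 * (N - 5) := by nlinarith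
  have key1 := mul_lt_mul_of_pos_left hB2 (mul_pos hN1 hN1)
  have hQ : 0 < 2500*(N-2)*(N-3) - 2448*F*(N-1)^2 := by nlinarith [key1]
  have hP : (0:ℝ) < N*(8*N-25)*(9*N+25) := by
    have : (0:ℝ) < 8*N-25 := by linarith
    have : (0:ℝ) < 9*N+25 := by linarith
    have : (0:ℝ) < N := by linarith
    positivity
  have key2 := mul_lt_mul_of_pos_left hB2 hP
  have hC : (0:ℝ) < 115*N^3 + 14*N^2 - 245*N - 2808 := by nlinarith
  have hQ2 : 0 < 625*(N-2)*(N-3)*(4*N+13) - 34*F*N*(8*N-25)*(9*N+25) := by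
    nlinarith [key2, hC]
  constructor
  · rw [div_lt_iff₀ hD]
    nlinarith [mul_pos hN1 hQ]
  · rw [gt_iff_lt, lt_div_iff₀ hD]
    nlinarith [hQ2]
end

section
/- Let F, C ∈ (0,1) and let N be a real number with N ≥ max{(5−2F)/(1−F), 11}. Then the function S_N(z) = (A₁z³ + A₂z² + A₃z + A₄)/((N−1)(N−2)(N−3)), where A₁ = −4FC, A₂ = (6N+6)FC, A₃ = −C((1+2F)N² + (8F−5)N + 6 + 2F), A₄ = CN³ + (2F−5)CN² + (6+2F)CN, is monotonically decreasing in z on [1, N]. -/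
theorem S_antitoneOn (F C N : ℝ) (hF : F ∈ Set.Ioo (0:ℝ) 1) (hC : C ∈ Set.Ioo (0:ℝ) 1)
    (hN : max ((5 - 2 * F) / (1 - F)) 11 ≤ N) :
    AntitoneOn (fun z : ℝ =>
      ((-4 * F * C) * z ^ 3 + ((6 * N + 6) * F * C) * z ^ 2
        + (-(C * ((1 + 2 * F) * N ^ 2 + (8 * F - 5) * N + 6 + 2 * F))) * z
        + (C * N ^ 3 + (2 * F - 5) * C * N ^ 2 + (6 + 2 * F) * C * N))
      / ((N - 1) * (N - 2) * (N - 3)))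
      (Set.Icc (1:ℝ) N) := by
  have hN11 : (11:ℝ) ≤ N := le_trans (le_max_right _ _) hN
  have h1F : (0:ℝ) < 1 - F := by linarith [hF.2]
  have hN1 : 5 - 2 * F ≤ (1 - F) * N := by
    have := le_trans (le_max_left ((5 - 2 * F) / (1 - F)) 11) hN
    calc 5 - 2 * F = (5 - 2 * F) / (1 - F) * (1 - F) := by field_simp
    _ ≤ N * (1 - F) := by nlinarith
    _ = (1 - F) * N := by ring
  have hD : (0:ℝ) < (N - 1) * (N - 2) * (N - 3) := by
    have h3 : (0:ℝ) < N - 3 := by linarith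
    have h2 : (0:ℝ) < N - 2 := by linarith
    have h1 : (0:ℝ) < N - 1 := by linarith
    positivity
  intro x hx y hy hxy
  simp only
  rw [div_le_div_iff_of_pos_right hD]
  have hB : (0:ℝ) ≤ F * (3 * (x + y - N - 1) ^ 2 + (x - y) ^ 2)
      + ((1 - F) * N ^ 2 + (2 * F - 5) * N + 6 - F) := by
    nlinarith [sq_nonneg (x + y - N - 1), sq_nonneg (x - y), hF.1, hN1, hN11]
  have hyx : (0:ℝ) ≤ y - x := by linarith
  nlinarith [mul_nonneg (mul_nonneg hC.1.le hyx) hB]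
end

section
/- Let F, C ∈ (0,1), N ≥ max{(5−2F)/(1−F), 11} a real number, and a ∈ (0,1). Then S_N(aN) ≥ C(1−a)(1/2 − F/8), where S_N(z) = (A₁z³ + A₂z² + A₃z + A₄)/((N−1)(N−2)(N−3)) with A₁ = −4FC, A₂ = (6N+6)FC, A₃ = −C((1+2F)N² + (8F−5)N + 6 + 2F), A₄ = CN³ + (2F−5)CN² + (6+2F)CN. -/
theorem S_lower_bound (F C N a : ℝ) (hF : F ∈ Set.Ioo (0:ℝ) 1) (hC : C ∈ Set.Ioo (0:ℝ) 1)
    (hN : max ((5 - 2 * F) / (1 - F)) 11 ≤ N) (ha : a ∈ Set.Ioo (0:ℝ) 1) :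
    ((-4 * F * C) * (a * N) ^ 3 + ((6 * N + 6) * F * C) * (a * N) ^ 2
        + (-(C * ((1 + 2 * F) * N ^ 2 + (8 * F - 5) * N + 6 + 2 * F))) * (a * N)
        + (C * N ^ 3 + (2 * F - 5) * C * N ^ 2 + (6 + 2 * F) * C * N))
      / ((N - 1) * (N - 2) * (N - 3))
    ≥ C * (1 - a) * (1/2 - F/8) := by
  have hN11 : (11:ℝ) ≤ N := le_trans (le_max_right _ _) hN
  have hD : 0 < (N - 1) * (N - 2) * (N - 3) := by
    have : (0:ℝ) < N - 3 := by linarith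
    have h2 : (0:ℝ) < N - 2 := by linarith
    have h1 : (0:ℝ) < N - 1 := by linarith
    positivity
  rw [ge_iff_le, le_div_iff₀ hD]
  have h1a : (0:ℝ) ≤ 1 - a := by linarith [ha.2]
  have hC0 : (0:ℝ) ≤ C := hC.1.le
  have hF0 : (0:ℝ) ≤ F := hF.1.le
  have hR : 0 ≤ (1/2 - F/8) * N^3 - (2 + F/4) * N^2 + (1/2 + 9*F/8) * N + 3 - 3*F/4 := by
    nlinarith [mul_nonneg (sub_nonneg.2 hF.2.le) (by nlinarith : (0:ℝ) ≤ N^3 + 2*N^2 - 9*N + 6),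
      sq_nonneg N, mul_pos (mul_pos (by linarith : (0:ℝ) < N) (by linarith : (0:ℝ) < N)) (by linarith : (0:ℝ) < N)]
  have h1 : 0 ≤ (1 - a) * C * (N * F * (2*a*N - (N+3)/2)^2) := by positivity
  have h2 : 0 ≤ (1 - a) * C * ((1/2 - F/8) * N^3 - (2 + F/4) * N^2 + (1/2 + 9*F/8) * N + 3 - 3*F/4) :=
    mul_nonneg (mul_nonneg h1a hC0) hR
  nlinarith [h1, h2]
end

section
/- Consider the Markov chain (p_t) on {0, 1/K, …, 1} (K even) with p₀ = 1/2, where given p_{t−1} = q, p_t = q + 1/K with probability q(1−q), p_t = q − 1/K with probability q(1−q), and p_t = q otherwise. Let T = min{t : p_t ∈ {0, 1}}. Then E[T] ≤ 4K²·√(1/2), i.e., E[T] = O(K²). -/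
open MeasureTheory ProbabilityTheory
open scoped ENNReal

/-!
With step `h = 1/K`, the potential `V(x) = 2/h² · (x(1-x) + √(min x (1-x)))` vanishes at the
absorbing states and, from every interior grid point `q`, decreases in expectation by at least `1`
per step. Indeed the term `x(1-x)` has second difference `-2h²` and so contributes exactly
`4q(1-q)` to the expected decrease, while for `q ≤ 1/2` concavity of `√` contributes at least
`(1-q)/(2√q)`; the sum is at least `1` (the case `q > 1/2` follows by the symmetry `x ↦ 1-x`). The
term `x(1-x)` is needed near `q = 1/2`, where the square root alone only gives about `0.35`.
Summing `E[V(p_{t+1})] + P(T > t) ≤ E[V(p_t)]` over `t` yields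
`E[T] ≤ ∑ₜ P(T > t) ≤ V(1/2) = 2K²(1/4 + √(1/2)) ≤ 4K²√(1/2)`.
-/

section Fibers

variable {Ω α : Type*} [MeasurableSpace Ω] [MeasurableSpace α] [MeasurableSingletonClass α]
  {μ : Measure Ω}

theorem setLIntegral_comp_eq_sum {s : Set Ω} (hs : MeasurableSet s) {Y : Ω → α}
    (hY : Measurable Y) (A : Finset α) (hμs : μ s ≠ ∞)
    (hA : ∑ a ∈ A, μ {ω | Y ω = a ∧ ω ∈ s} = μ s) (f : α → ℝ≥0∞) :
    ∫⁻ ω in s, f (Y ω) ∂μ = ∑ a ∈ A, f a * μ {ω | Y ω = a ∧ ω ∈ s} := by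
  have hmeas : ∀ a ∈ A, MeasurableSet {ω | Y ω = a ∧ ω ∈ s} :=
    fun a _ => (hY (measurableSet_singleton a)).inter hs
  have hdisj : (A : Set α).PairwiseDisjoint fun a => {ω | Y ω = a ∧ ω ∈ s} :=
    (Set.pairwiseDisjoint_fiber Y A).mono fun a ω hω => hω.1
  have hae : (⋃ a ∈ A, {ω | Y ω = a ∧ ω ∈ s}) =ᵐ[μ] s := by
    refine ae_eq_of_subset_of_measure_ge (Set.iUnion₂_subset fun a _ ω hω => hω.2) ?_
      (MeasurableSet.biUnion A.countable_toSet hmeas).nullMeasurableSet hμs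
    rw [measure_biUnion_finset hdisj hmeas, hA]
  rw [← setLIntegral_congr hae, lintegral_biUnion_finset hdisj hmeas]
  refine Finset.sum_congr rfl fun a ha => ?_
  rw [setLIntegral_congr_fun (hmeas a ha) fun ω hω => by rw [hω.1], setLIntegral_const]

theorem lintegral_le_of_forall_fiber_le {X : Ω → α} (hX : Measurable X) (G : Finset α)
    (hG : ∀ ω, X ω ∈ G) {f g : Ω → ℝ≥0∞}
    (hfg : ∀ x ∈ G, ∫⁻ ω in X ⁻¹' {x}, f ω ∂μ ≤ ∫⁻ ω in X ⁻¹' {x}, g ω ∂μ) :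
    ∫⁻ ω, f ω ∂μ ≤ ∫⁻ ω, g ω ∂μ := by
  have hcover : (⋃ x ∈ G, X ⁻¹' {x}) = Set.univ :=
    Set.eq_univ_of_forall fun ω => Set.mem_biUnion (hG ω) rfl
  have hsum (φ : Ω → ℝ≥0∞) : ∫⁻ ω, φ ω ∂μ = ∑ x ∈ G, ∫⁻ ω in X ⁻¹' {x}, φ ω ∂μ := by
    rw [← setLIntegral_univ, ← hcover, lintegral_biUnion_finset
      (Set.pairwiseDisjoint_fiber X (G : Set α)) fun x _ => hX (measurableSet_singleton x)]
  rw [hsum f, hsum g]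
  exact Finset.sum_le_sum hfg

end Fibers

theorem sInf_natCast_le_tsum_indicator {P : ℕ → Prop} :
    sInf {t : ℝ≥0∞ | ∃ n : ℕ, t = n ∧ P n} ≤ ∑' n, {n | ¬P n}.indicator 1 n := by
  by_cases hex : ∃ n, P n
  · classical
    calc sInf {t : ℝ≥0∞ | ∃ n : ℕ, t = n ∧ P n} ≤ (Nat.find hex : ℝ≥0∞) :=
          sInf_le ⟨_, rfl, Nat.find_spec hex⟩
      _ = ∑ n ∈ Finset.range (Nat.find hex), {n | ¬P n}.indicator 1 n := by
          rw [Finset.sum_congr rfl fun n hn =>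
            Set.indicator_of_mem (Nat.find_min hex (Finset.mem_range.mp hn)) _]
          simp
      _ ≤ ∑' n, {n | ¬P n}.indicator 1 n := ENNReal.sum_le_tsum _
  · push Not at hex
    simp [hex]

theorem lintegral_hittingTime_le_tsum {Ω : Type*} [MeasurableSpace Ω] (μ : Measure Ω)
    {P : ℕ → Ω → Prop} (hP : ∀ n, MeasurableSet {ω | P n ω}) :
    ∫⁻ ω, sInf {t : ℝ≥0∞ | ∃ n : ℕ, t = n ∧ P n ω} ∂μ ≤ ∑' n, μ {ω | ¬P n ω} := by
  have hP' : ∀ n, MeasurableSet {ω | ¬P n ω} := fun n => (hP n).compl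
  calc ∫⁻ ω, sInf {t : ℝ≥0∞ | ∃ n : ℕ, t = n ∧ P n ω} ∂μ
      ≤ ∫⁻ ω, ∑' n, {ω | ¬P n ω}.indicator 1 ω ∂μ :=
        lintegral_mono fun ω => sInf_natCast_le_tsum_indicator
    _ = ∑' n, μ {ω | ¬P n ω} := by
      rw [lintegral_tsum fun n => (measurable_one.indicator (hP' n)).aemeasurable]
      exact tsum_congr fun n => lintegral_indicator_one (hP' n)

theorem ENNReal.tsum_le_of_add_le {F I : ℕ → ℝ≥0∞} (h : ∀ n, F (n + 1) + I n ≤ F n) :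
    ∑' n, I n ≤ F 0 := by
  have hpartial : ∀ N, F N + ∑ n ∈ Finset.range N, I n ≤ F 0 := by
    intro N
    induction N with
    | zero => simp
    | succ N ih =>
      calc F (N + 1) + ∑ n ∈ Finset.range (N + 1), I n
          = F (N + 1) + I N + ∑ n ∈ Finset.range N, I n := by rw [Finset.sum_range_succ]; ring
        _ ≤ F 0 := (add_le_add_left (h N) _).trans ih
  exact ENNReal.tsum_le_of_sum_range_le fun N => le_add_self.trans (hpartial N)

theorem sqrt_add_add_sqrt_sub_le {q h : ℝ} (hh : 0 < h) (hq : h ≤ q) :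
    √(q + h) + √(q - h) ≤ 2 * √q - h ^ 2 / (4 * q * √q) := by
  have hq0 : 0 < q := hh.trans_le hq
  have hs : 0 < √q := Real.sqrt_pos.mpr hq0
  have hs2 : √q ^ 2 = q := Real.sq_sqrt hq0.le
  have hprod : √(q + h) * √(q - h) ≤ q - h ^ 2 / (2 * q) := by
    rw [← Real.sqrt_mul (by linarith), Real.sqrt_le_iff]
    constructor
    · rw [sub_nonneg, div_le_iff₀ (by positivity)]
      nlinarith
    · have : (q - h ^ 2 / (2 * q)) ^ 2 = (q + h) * (q - h) + (h ^ 2 / (2 * q)) ^ 2 := by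
        field_simp; ring
      nlinarith [sq_nonneg (h ^ 2 / (2 * q))]
  have hrhs : 0 ≤ 2 * √q - h ^ 2 / (4 * q * √q) := by
    rw [sub_nonneg, div_le_iff₀ (by positivity)]
    nlinarith
  refine (pow_le_pow_iff_left₀ (by positivity) hrhs two_ne_zero).mp ?_
  have hlhs : (√(q + h) + √(q - h)) ^ 2 = 2 * q + 2 * (√(q + h) * √(q - h)) := by
    rw [add_sq, Real.sq_sqrt (by linarith), Real.sq_sqrt (by linarith)]; ring
  have hrhs' : (2 * √q - h ^ 2 / (4 * q * √q)) ^ 2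
      = 4 * q - h ^ 2 / q + (h ^ 2 / (4 * q * √q)) ^ 2 := by
    field_simp
    rw [hs2]
    ring
  rw [hlhs, hrhs']
  have : 2 * (q - h ^ 2 / (2 * q)) = 2 * q - h ^ 2 / q := by field_simp
  linarith [sq_nonneg (h ^ 2 / (4 * q * √q))]

theorem one_le_four_mul_add_div_two_sqrt {q : ℝ} (hq : 0 < q) (hq' : q ≤ 1 / 2) :
    1 ≤ 4 * q * (1 - q) + (1 - q) / (2 * √q) := by
  obtain ⟨s, hs, rfl⟩ : ∃ s, 0 < s ∧ s ^ 2 = q := ⟨√q, Real.sqrt_pos.mpr hq, Real.sq_sqrt hq.le⟩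
  rw [Real.sqrt_sq hs.le, ← sub_nonneg]
  have : 4 * s ^ 2 * (1 - s ^ 2) + (1 - s ^ 2) / (2 * s) - 1
      = (-8 * s ^ 5 + 8 * s ^ 3 - s ^ 2 - 2 * s + 1) / (2 * s) := by
    field_simp; ring
  rw [this]
  apply div_nonneg _ (by linarith)
  nlinarith [sq_nonneg (s - 1 / 2), sq_nonneg (s * (s - 1 / 2)), mul_pos hs hs]

noncomputable def absorptionPotential (h x : ℝ) : ℝ := 2 / h ^ 2 * (x * (1 - x) + √(min x (1 - x)))

noncomputable def expectedDecrease (h q : ℝ) : ℝ :=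
  q * (1 - q) *
    (2 * absorptionPotential h q - absorptionPotential h (q + h) - absorptionPotential h (q - h))

theorem absorptionPotential_one_sub (h x : ℝ) :
    absorptionPotential h (1 - x) = absorptionPotential h x := by
  simp only [absorptionPotential, sub_sub_cancel, min_comm (1 - x) x]
  ring

theorem absorptionPotential_nonneg (h : ℝ) {x : ℝ} (hx : 0 ≤ x) (hx' : x ≤ 1) :
    0 ≤ absorptionPotential h x := by
  have : 0 ≤ x * (1 - x) := mul_nonneg hx (by linarith)
  unfold absorptionPotential
  positivity

theorem absorptionPotential_half_le (h : ℝ) :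
    absorptionPotential h (1 / 2) ≤ 4 / h ^ 2 * √(1 / 2) := by
  have hsqrt : (1 / 2 : ℝ) ≤ √(1 / 2) := by
    rw [Real.le_sqrt (by norm_num) (by norm_num)]; norm_num
  unfold absorptionPotential
  rw [min_eq_left (by norm_num)]
  calc 2 / h ^ 2 * (1 / 2 * (1 - 1 / 2) + √(1 / 2)) ≤ 2 / h ^ 2 * (2 * √(1 / 2)) := by
        gcongr; linarith
    _ = 4 / h ^ 2 * √(1 / 2) := by ring

theorem expectedDecrease_one_sub (h q : ℝ) : expectedDecrease h (1 - q) = expectedDecrease h q := by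
  unfold expectedDecrease
  rw [show 1 - q + h = 1 - (q - h) by ring, show 1 - q - h = 1 - (q + h) by ring]
  simp only [absorptionPotential_one_sub]
  ring

theorem one_le_expectedDecrease_of_add_le_half {h q : ℝ} (hh : 0 < h) (hq : h ≤ q)
    (hq' : q + h ≤ 1 / 2) : 1 ≤ expectedDecrease h q := by
  have hq0 : 0 < q := hh.trans_le hq
  have hgap := sqrt_add_add_sqrt_sub_le hh hq
  have hsplit : expectedDecrease h q
      = 4 * q * (1 - q) + 2 / h ^ 2 * (q * (1 - q)) * (2 * √q - √(q + h) - √(q - h)) := by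
    simp only [expectedDecrease, absorptionPotential, min_eq_left (by linarith : q ≤ 1 - q),
      min_eq_left (by linarith : q + h ≤ 1 - (q + h)), min_eq_left (by linarith : q - h ≤ 1 - (q - h))]
    field_simp
    ring
  have hconc : (1 - q) / (2 * √q)
      ≤ 2 / h ^ 2 * (q * (1 - q)) * (2 * √q - √(q + h) - √(q - h)) := by
    have hs : 0 < √q := Real.sqrt_pos.mpr hq0
    have hr : 0 ≤ q * (1 - q) := mul_nonneg hq0.le (by linarith)
    calc (1 - q) / (2 * √q) = 2 / h ^ 2 * (q * (1 - q)) * (h ^ 2 / (4 * q * √q)) := by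
          field_simp; ring
      _ ≤ _ := by gcongr; linarith
  linarith [one_le_four_mul_add_div_two_sqrt hq0 (by linarith)]

theorem one_le_expectedDecrease_half {h : ℝ} (hh : 0 < h) :
    1 ≤ expectedDecrease h (1 / 2) := by
  have hmono : √(1 / 2 - h) ≤ √(1 / 2) := Real.sqrt_le_sqrt (by linarith)
  have hsplit : expectedDecrease h (1 / 2) = 1 + 1 / h ^ 2 * (√(1 / 2) - √(1 / 2 - h)) := by
    simp only [expectedDecrease, absorptionPotential, min_eq_left (by norm_num : (1 / 2 : ℝ) ≤ 1 - 1 / 2),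
      show 1 - (1 / 2 + h) = 1 / 2 - h by ring, min_eq_right (by linarith : 1 / 2 - h ≤ 1 / 2 + h),
      min_eq_left (by linarith : 1 / 2 - h ≤ 1 - (1 / 2 - h))]
    field_simp
    ring
  rw [hsplit]
  have : 0 ≤ 1 / h ^ 2 * (√(1 / 2) - √(1 / 2 - h)) := by
    apply mul_nonneg (by positivity); linarith
  linarith

theorem one_le_expectedDecrease {h q : ℝ} (hh : 0 < h) (hq : h ≤ q) (hq' : q ≤ 1 - h)
    (hmid : q + h ≤ 1 / 2 ∨ q = 1 / 2 ∨ 1 / 2 ≤ q - h) : 1 ≤ expectedDecrease h q := by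
  rcases hmid with hlow | rfl | hhigh
  · exact one_le_expectedDecrease_of_add_le_half hh hq hlow
  · exact one_le_expectedDecrease_half hh
  · rw [← expectedDecrease_one_sub]
    exact one_le_expectedDecrease_of_add_le_half hh (by linarith) (by linarith)

theorem setLIntegral_preimage_eq_of_lazy_step {Ω : Type*} [MeasurableSpace Ω] {μ : Measure Ω}
    [IsFiniteMeasure μ] {X Y : Ω → ℝ} (hX : Measurable X) (hY : Measurable Y) {h q : ℝ}
    (hh : h ≠ 0) {r : ℝ≥0∞} (hr : 2 * r ≤ 1)
    (hup : μ {ω | Y ω = q + h ∧ X ω = q} = r * μ {ω | X ω = q})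
    (hdown : μ {ω | Y ω = q - h ∧ X ω = q} = r * μ {ω | X ω = q})
    (hstay : μ {ω | Y ω = q ∧ X ω = q} = (1 - 2 * r) * μ {ω | X ω = q}) (f : ℝ → ℝ≥0∞) :
    ∫⁻ ω in X ⁻¹' {q}, f (Y ω) ∂μ
      = (r * f (q + h) + r * f (q - h) + (1 - 2 * r) * f q) * μ (X ⁻¹' {q}) := by
  have hdistinct : q + h ∉ ({q - h, q} : Finset ℝ) ∧ q - h ∉ ({q} : Finset ℝ) := by
    simp only [Finset.mem_insert, Finset.mem_singleton]
    constructor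
    · rintro (h' | h') <;> apply hh <;> linarith
    · intro h'; apply hh; linarith
  have hsum (g : ℝ → ℝ≥0∞) : ∑ a ∈ ({q + h, q - h, q} : Finset ℝ), g a = g (q + h) + g (q - h) + g q := by
    rw [Finset.sum_insert hdistinct.1, Finset.sum_insert hdistinct.2, Finset.sum_singleton, add_assoc]
  have hmass : ∑ a ∈ ({q + h, q - h, q} : Finset ℝ), μ {ω | Y ω = a ∧ ω ∈ X ⁻¹' {q}}
      = μ (X ⁻¹' {q}) := by
    rw [hsum]
    change μ {ω | Y ω = q + h ∧ X ω = q} + μ {ω | Y ω = q - h ∧ X ω = q}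
      + μ {ω | Y ω = q ∧ X ω = q} = μ {ω | X ω = q}
    rw [hup, hdown, hstay, ← add_mul, ← add_mul, ← two_mul, add_comm, tsub_add_cancel_of_le hr,
      one_mul]
  rw [setLIntegral_comp_eq_sum (hX (measurableSet_singleton q)) hY _ (measure_ne_top μ _) hmass,
    hsum]
  change f (q + h) * μ {ω | Y ω = q + h ∧ X ω = q} + f (q - h) * μ {ω | Y ω = q - h ∧ X ω = q}
    + f q * μ {ω | Y ω = q ∧ X ω = q}
      = (r * f (q + h) + r * f (q - h) + (1 - 2 * r) * f q) * μ {ω | X ω = q}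
  rw [hup, hdown, hstay]
  ring

theorem two_mul_ofReal_mul_one_sub_le_one (q : ℝ) : 2 * ENNReal.ofReal (q * (1 - q)) ≤ 1 := by
  rw [← ENNReal.ofReal_ofNat 2, ← ENNReal.ofReal_mul zero_le_two, ← ENNReal.ofReal_one]
  exact ENNReal.ofReal_le_ofReal (by nlinarith [sq_nonneg (q - 1 / 2)])

theorem interior_grid_point_bounds {K j : ℕ} (hKeven : Even K) (hj : 0 < j) (hjK : j < K) :
    1 / K ≤ (j : ℝ) / K ∧ (j : ℝ) / K ≤ 1 - 1 / K ∧
      ((j : ℝ) / K + 1 / K ≤ 1 / 2 ∨ (j : ℝ) / K = 1 / 2 ∨ 1 / 2 ≤ (j : ℝ) / K - 1 / K) := by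
  have hK : (0 : ℝ) < K := by exact_mod_cast hj.trans hjK
  obtain ⟨k, rfl⟩ := hKeven
  refine ⟨?_, ?_, ?_⟩
  · gcongr
    exact_mod_cast hj
  · rw [le_sub_iff_add_le, ← add_div, div_le_one hK]
    exact_mod_cast hjK
  · rw [← add_div, ← sub_div, div_le_iff₀ hK, le_div_iff₀ hK, div_eq_iff hK.ne']
    push_cast
    rcases lt_trichotomy j k with hjk | rfl | hjk
    · left
      have : (j : ℝ) + 1 ≤ k := by exact_mod_cast hjk
      linarith
    · right; left; ring
    · right; right
      have : (k : ℝ) + 1 ≤ j := by exact_mod_cast hjk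
      linarith

theorem lazy_step_potential_add_indicator_le {K : ℕ} (hK : 0 < K) (hKeven : Even K) {q : ℝ}
    (hq : ∃ j : ℕ, j ≤ K ∧ q = j / K) :
    ENNReal.ofReal (q * (1 - q)) * ENNReal.ofReal (absorptionPotential (1 / K) (q + 1 / K))
      + ENNReal.ofReal (q * (1 - q)) * ENNReal.ofReal (absorptionPotential (1 / K) (q - 1 / K))
      + (1 - 2 * ENNReal.ofReal (q * (1 - q))) * ENNReal.ofReal (absorptionPotential (1 / K) q)
      + ({0, 1}ᶜ : Set ℝ).indicator 1 q
      ≤ ENNReal.ofReal (absorptionPotential (1 / K) q) := by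
  obtain ⟨j, hjK, rfl⟩ := hq
  have hK' : (0 : ℝ) < K := by exact_mod_cast hK
  rcases Nat.eq_zero_or_pos j with rfl | hj
  · simp
  rcases hjK.eq_or_lt with rfl | hjK
  · simp [div_self hK'.ne']
  obtain ⟨hlow, hhigh, hmid⟩ := interior_grid_point_bounds hKeven hj hjK
  set q : ℝ := (j : ℝ) / K
  set h : ℝ := 1 / (K : ℝ)
  have hh : 0 < h := by positivity
  have hdecr := one_le_expectedDecrease hh hlow hhigh hmid
  have hr : 0 ≤ q * (1 - q) := mul_nonneg (by linarith) (by linarith)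
  have hr' : 0 ≤ 1 - 2 * (q * (1 - q)) := by nlinarith [sq_nonneg (q - 1 / 2)]
  have hV (x : ℝ) (hx : 0 ≤ x) (hx' : x ≤ 1) := absorptionPotential_nonneg h hx hx'
  have hind : ({0, 1}ᶜ : Set ℝ).indicator (1 : ℝ → ℝ≥0∞) q = 1 := by
    refine Set.indicator_of_mem ?_ _
    simp only [Set.mem_compl_iff, Set.mem_insert_iff, Set.mem_singleton_iff, not_or]
    constructor <;> intro h' <;> linarith
  have hstay : 1 - 2 * ENNReal.ofReal (q * (1 - q)) = ENNReal.ofReal (1 - 2 * (q * (1 - q))) := by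
    rw [ENNReal.ofReal_sub _ (by positivity), ENNReal.ofReal_one,
      ENNReal.ofReal_mul zero_le_two, ENNReal.ofReal_ofNat]
  have hup := mul_nonneg hr (hV (q + h) (by linarith) (by linarith))
  have hdown := mul_nonneg hr (hV (q - h) (by linarith) (by linarith))
  have hstay' := mul_nonneg hr' (hV q (by linarith) (by linarith))
  rw [hind, hstay, ← ENNReal.ofReal_mul hr, ← ENNReal.ofReal_mul hr, ← ENNReal.ofReal_mul hr',
    ← ENNReal.ofReal_one, ← ENNReal.ofReal_add hup hdown,
    ← ENNReal.ofReal_add (add_nonneg hup hdown) hstay',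
    ← ENNReal.ofReal_add (add_nonneg (add_nonneg hup hdown) hstay') zero_le_one]
  refine ENNReal.ofReal_le_ofReal ?_
  unfold expectedDecrease at hdecr
  linarith

theorem lintegral_potential_add_measure_le {Ω : Type*} [MeasurableSpace Ω] {μ : Measure Ω}
    [IsFiniteMeasure μ] {K : ℕ} (hK : 0 < K) (hKeven : Even K) {X Y : Ω → ℝ}
    (hX : Measurable X) (hY : Measurable Y) (hgrid : ∀ ω, ∃ j : ℕ, j ≤ K ∧ X ω = (j : ℝ) / K)
    (hup : ∀ q : ℝ,
      μ {ω | Y ω = q + 1/K ∧ X ω = q} = ENNReal.ofReal (q * (1 - q)) * μ {ω | X ω = q})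
    (hdown : ∀ q : ℝ,
      μ {ω | Y ω = q - 1/K ∧ X ω = q} = ENNReal.ofReal (q * (1 - q)) * μ {ω | X ω = q})
    (hstay : ∀ q : ℝ,
      μ {ω | Y ω = q ∧ X ω = q} = (1 - 2 * ENNReal.ofReal (q * (1 - q))) * μ {ω | X ω = q}) :
    ∫⁻ ω, ENNReal.ofReal (absorptionPotential (1 / K) (Y ω)) ∂μ + μ {ω | ¬(X ω = 0 ∨ X ω = 1)}
      ≤ ∫⁻ ω, ENNReal.ofReal (absorptionPotential (1 / K) (X ω)) ∂μ := by
  set Φ : ℝ → ℝ≥0∞ := fun x => ENNReal.ofReal (absorptionPotential (1 / K) x)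
  set c : ℝ → ℝ≥0∞ := ({0, 1}ᶜ : Set ℝ).indicator 1
  set G : Finset ℝ := (Finset.range (K + 1)).image fun j : ℕ => (j : ℝ) / K
  have hG : ∀ ω, X ω ∈ G := fun ω => by
    obtain ⟨j, hj, hXj⟩ := hgrid ω
    exact Finset.mem_image.mpr ⟨j, Finset.mem_range.mpr (Nat.lt_succ_of_le hj), hXj.symm⟩
  have hc : μ {ω | ¬(X ω = 0 ∨ X ω = 1)} = ∫⁻ ω, c (X ω) ∂μ :=
    (lintegral_indicator_one (hX ((measurableSet_singleton 1).insert 0).compl)).symm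
  rw [hc]
  refine (le_lintegral_add _ _).trans (lintegral_le_of_forall_fiber_le hX G hG fun q hq => ?_)
  obtain ⟨j, hj, hjq⟩ := Finset.mem_image.mp hq
  have hfiber := hX (measurableSet_singleton q)
  calc ∫⁻ ω in X ⁻¹' {q}, Φ (Y ω) + c (X ω) ∂μ = ∫⁻ ω in X ⁻¹' {q}, Φ (Y ω) + c q ∂μ :=
        setLIntegral_congr_fun hfiber fun ω (hω : X ω = q) => by rw [hω]
    _ = (ENNReal.ofReal (q * (1 - q)) * Φ (q + 1 / K) + ENNReal.ofReal (q * (1 - q)) * Φ (q - 1 / K)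
          + (1 - 2 * ENNReal.ofReal (q * (1 - q))) * Φ q + c q) * μ (X ⁻¹' {q}) := by
        rw [lintegral_add_right _ measurable_const, setLIntegral_const,
          setLIntegral_preimage_eq_of_lazy_step hX hY (by positivity)
            (two_mul_ofReal_mul_one_sub_le_one q) (hup q) (hdown q) (hstay q), ← add_mul]
    _ ≤ Φ q * μ (X ⁻¹' {q}) := by
        gcongr
        exact lazy_step_potential_add_indicator_le hK hKeven
          ⟨j, Nat.lt_succ_iff.mp (Finset.mem_range.mp hj), hjq.symm⟩
    _ = ∫⁻ ω in X ⁻¹' {q}, Φ (X ω) ∂μ := by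
        rw [setLIntegral_congr_fun hfiber fun ω (hω : X ω = q) => by rw [hω], setLIntegral_const]

/-- Upper bound on the expected absorption time of the cGA neutral-bit frequency
process: the Markov chain `(p_t)` on `{0, 1/K, …, 1}` starts at `1/2` and, given
`p_{t−1} = q`, moves to `q + 1/K` with probability `q(1−q)`, to `q − 1/K` with
probability `q(1−q)`, and stays at `q` otherwise. The hitting time
`T = min{t : p_t ∈ {0,1}}` satisfies `E[T] ≤ 4K²·√(1/2)`. -/
theorem cga_neutral_absorption_time (K : ℕ) (hK : 0 < K) (hKeven : Even K)
    {Ω : Type*} [MeasurableSpace Ω] (μ : Measure Ω) [IsProbabilityMeasure μ]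
    (p : ℕ → Ω → ℝ) (hmeas : ∀ t, Measurable (p t))
    (h0 : ∀ ω, p 0 ω = 1/2)
    (hgrid : ∀ t ω, ∃ j : ℕ, j ≤ K ∧ p t ω = (j : ℝ) / K)
    (hup : ∀ t : ℕ, ∀ q : ℝ,
      μ {ω | p (t+1) ω = q + 1/K ∧ p t ω = q}
        = ENNReal.ofReal (q * (1 - q)) * μ {ω | p t ω = q})
    (hdown : ∀ t : ℕ, ∀ q : ℝ,
      μ {ω | p (t+1) ω = q - 1/K ∧ p t ω = q}
        = ENNReal.ofReal (q * (1 - q)) * μ {ω | p t ω = q})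
    (hstay : ∀ t : ℕ, ∀ q : ℝ,
      μ {ω | p (t+1) ω = q ∧ p t ω = q}
        = (1 - 2 * ENNReal.ofReal (q * (1 - q))) * μ {ω | p t ω = q})
    (T : Ω → ℝ≥0∞)
    (hT : ∀ ω, T ω = sInf {t : ℝ≥0∞ | ∃ n : ℕ, t = n ∧ (p n ω = 0 ∨ p n ω = 1)}) :
    ∫⁻ ω, T ω ∂μ ≤ ENNReal.ofReal (4 * (K : ℝ) ^ 2 * Real.sqrt (1/2)) := by
  have hstep (t : ℕ) := lintegral_potential_add_measure_le hK hKeven (hmeas t) (hmeas (t + 1))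
    (hgrid t) (hup t) (hdown t) (hstay t)
  have hinit : ∫⁻ ω, ENNReal.ofReal (absorptionPotential (1 / K) (p 0 ω)) ∂μ
      ≤ ENNReal.ofReal (4 * (K : ℝ) ^ 2 * Real.sqrt (1/2)) := by
    simp only [h0, lintegral_const, measure_univ, mul_one]
    refine ENNReal.ofReal_le_ofReal ((absorptionPotential_half_le _).trans_eq ?_)
    field_simp
  have habsorbed (n : ℕ) : MeasurableSet {ω | p n ω = 0 ∨ p n ω = 1} :=
    (hmeas n (measurableSet_singleton 0)).union (hmeas n (measurableSet_singleton 1))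
  calc ∫⁻ ω, T ω ∂μ ≤ ∑' n, μ {ω | ¬(p n ω = 0 ∨ p n ω = 1)} := by
        simp_rw [hT]; exact lintegral_hittingTime_le_tsum μ habsorbed
    _ ≤ ∫⁻ ω, ENNReal.ofReal (absorptionPotential (1 / K) (p 0 ω)) ∂μ :=
        ENNReal.tsum_le_of_add_le hstep
    _ ≤ _ := hinit
end
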